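/- Let d = 1, C > 0, t₀ > 0, and u₀(x) = C e^{−x²/(4t₀)}. Let u_k be the heat-kernel derivative approximation of order k built from u₀ (in one spatial dimension). Then for every t > 0 and every even k ≥ 0, √π · u_k(0,t) = C √(π t₀ / t) + C π^{−1/2} Σ_{0 < j ≤ k, j even} ((−1)^{j/2} / j!) (t₀/t)^{(j+1)/2} Γ((j+1)/2)² · 2^j. -/

import Mathlib

open MeasureTheory Real Filter

noncomputable section

/-- The one-dimensional heat kernel `G(x,t) = (4πt)^{-1/2} exp(-x²/(4t))`. -/
def heatKernel1 (x t : ℝ) : ℝ :=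
  (4 * π * t) ^ (-(1 : ℝ) / 2) * Real.exp (-x ^ 2 / (4 * t))

/-- The one-dimensional heat-kernel derivative approximation of order `k`:
`u_k(x,t) = ∑_{j=0}^k ((-1)^j/j!) (∫ y^j u₀(y) dy) ∂_x^j G(x,t)`. -/
def heatApprox1 (k : ℕ) (u₀ : ℝ → ℝ) (x t : ℝ) : ℝ :=
  ∑ j ∈ Finset.range (k + 1),
    ((-1 : ℝ) ^ j / (j.factorial : ℝ)) * (∫ y, y ^ j * u₀ y) *
      iteratedDeriv j (fun z => heatKernel1 z t) x

section Helpers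
open Polynomial
open scoped Nat

lemma aux_aeval_hermite_zero (m : ℕ) :
    (Polynomial.aeval (0:ℝ)) (Polynomial.hermite (2*m)) = (-1:ℝ)^m * ((2*m-1)‼ : ℝ) := by
  rw [Polynomial.aeval_def, Polynomial.eval₂_at_zero]
  have h := Polynomial.coeff_hermite_explicit m 0
  rw [add_zero] at h
  rw [h]
  push_cast
  simp

lemma aux_dfac (m : ℕ) : (2*m-1)‼ * (2^m * m !) = (2*m)! := by
  induction m with
  | zero => rfl
  | succ n ih =>
    have h1 : 2*(n+1)-1 = 2*n+1 := by omega
    have h2 : (2*n+1)‼ = (2*n+1) * (2*n-1)‼ := by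
      cases n with
      | zero => rfl
      | succ k =>
        rw [show 2*(k+1)-1 = 2*k+1 by omega, show 2*(k+1)+1 = (2*k+1)+2 by ring,
          Nat.doubleFactorial_add_two]
    rw [h1, h2, pow_succ, Nat.factorial_succ,
      show 2*(n+1) = (2*n+1)+1 by ring, Nat.factorial_succ,
      show 2*n+1 = (2*n)+1 from rfl, Nat.factorial_succ, ← ih]
    ring

lemma aux_Gamma_half (m : ℕ) :
    Real.Gamma ((m:ℝ) + 1/2) = Real.sqrt π * ((2*m)! : ℝ) / (4^m * (m ! : ℝ)) := by
  induction m with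
  | zero => rw [Nat.cast_zero, zero_add, Real.Gamma_one_half_eq]; norm_num
  | succ n ih =>
    have h : ((n+1:ℕ):ℝ) + 1/2 = ((n:ℝ) + 1/2) + 1 := by push_cast; ring
    rw [h, Real.Gamma_add_one (by positivity), ih,
      show 2*(n+1) = ((2*n+1)+1) by ring, Nat.factorial_succ,
      show 2*n+1 = (2*n)+1 from rfl, Nat.factorial_succ, Nat.factorial_succ]
    have hn : ((n ! : ℕ) : ℝ) ≠ 0 := by positivity
    push_cast
    field_simp
    ring

lemma aux_moment {b : ℝ} (hb : 0 < b) (m : ℕ) :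
    ∫ y : ℝ, y ^ (2*m) * Real.exp (-(b * y^2))
      = b ^ (-(((2*m : ℕ) : ℝ) + 1)/2) * Real.Gamma ((((2*m : ℕ) : ℝ) + 1)/2) := by
  have h1 : (∫ y : ℝ, y ^ (2*m) * Real.exp (-(b * y^2)))
      = ∫ y : ℝ, (fun x : ℝ => x ^ (2*m) * Real.exp (-(b * x^2))) |y| := by
    congr 1; funext y
    simp only [pow_mul, sq_abs]
  rw [h1, integral_comp_abs (f := fun x : ℝ => x ^ (2*m) * Real.exp (-(b * x^2)))]
  have h2 : (∫ x in Set.Ioi (0:ℝ), x ^ (2*m) * Real.exp (-(b * x^2)))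
      = ∫ x in Set.Ioi (0:ℝ), x ^ (((2*m : ℕ) : ℝ)) * Real.exp (-b * x ^ (2:ℝ)) := by
    refine setIntegral_congr_fun measurableSet_Ioi (fun x hx => ?_)
    rw [Real.rpow_natCast, show (2:ℝ) = ((2:ℕ):ℝ) by norm_num, Real.rpow_natCast]
    norm_num
  rw [h2, integral_rpow_mul_exp_neg_mul_rpow (by norm_num) (lt_of_lt_of_le neg_one_lt_zero (Nat.cast_nonneg _)) hb]
  ring

lemma aux_odd {j : ℕ} (hj : Odd j) (c b : ℝ) :
    ∫ y : ℝ, y ^ j * (c * Real.exp (-y^2 / b)) = 0 := by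
  have h := integral_neg_eq_self (fun y : ℝ => y ^ j * (c * Real.exp (-y^2/b))) volume
  simp only [neg_sq, hj.neg_pow, neg_mul] at h
  rw [integral_neg] at h
  linarith

lemma contDiff_gauss : ContDiff ℝ (⊤ : ℕ∞) (fun y : ℝ => Real.exp (-(y^2/2))) :=
  Real.contDiff_exp.comp (((contDiff_id.pow 2).div_const 2).neg)

lemma iteratedDeriv_const_mul' {n : ℕ} (c : ℝ) {f : ℝ → ℝ} (h : ContDiff ℝ n f) (x : ℝ) :
    iteratedDeriv n (fun z => c * f z) x = c * iteratedDeriv n f x := by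
  simp only [← iteratedDerivWithin_univ]
  exact iteratedDerivWithin_const_mul (Set.mem_univ x) uniqueDiffOn_univ c h.contDiffWithinAt

lemma aux_iteratedDeriv_gaussian (n : ℕ) :
    iteratedDeriv n (fun y : ℝ => Real.exp (-(y^2/2))) 0
      = (-1:ℝ)^n * (Polynomial.aeval (0:ℝ)) (Polynomial.hermite n) := by
  rw [iteratedDeriv_eq_iterate, Polynomial.deriv_gaussian_eq_hermite_mul_gaussian]
  norm_num

lemma aux_deriv_heatKernel {t : ℝ} (ht : 0 < t) (n : ℕ) :
    iteratedDeriv n (fun z => heatKernel1 z t) 0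
      = (4*π*t) ^ (-(1:ℝ)/2) * ((Real.sqrt (2*t))⁻¹)^n
          * ((-1:ℝ)^n * (Polynomial.aeval (0:ℝ)) (Polynomial.hermite n)) := by
  have h2t : (0:ℝ) < 2*t := by linarith
  set c : ℝ := (Real.sqrt (2*t))⁻¹ with hc
  have hfun : (fun z => heatKernel1 z t)
      = fun z => (4*π*t) ^ (-(1:ℝ)/2) * (fun y : ℝ => Real.exp (-(y^2/2))) (c * z) := by
    funext z
    have harg : -z^2/(4*t) = -((c*z)^2/2) := by
      rw [hc, mul_pow, inv_pow, Real.sq_sqrt h2t.le]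
      ring
    simp only [heatKernel1, harg]
  have hcd : ContDiff ℝ (n : ℕ∞) (fun z : ℝ => (fun y : ℝ => Real.exp (-(y^2/2))) (c * z)) :=
    (contDiff_gauss.of_le (mod_cast le_top)).comp (contDiff_const.mul contDiff_id)
  rw [hfun, iteratedDeriv_const_mul' _ hcd 0,
    congrFun (iteratedDeriv_comp_const_mul (contDiff_gauss.of_le (mod_cast le_top)) c) 0]
  simp only [mul_zero]
  rw [aux_iteratedDeriv_gaussian]
  ring

lemma aux_key (C t₀ t : ℝ) (ht₀ : 0 < t₀) (ht : 0 < t) (m : ℕ) :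
    Real.sqrt π * (((-1:ℝ)^(2*m) / ((2*m)! : ℝ)) *
        (∫ y, y ^ (2*m) * (C * Real.exp (-y^2/(4*t₀)))) *
        iteratedDeriv (2*m) (fun z => heatKernel1 z t) 0)
      = C * π ^ (-(1:ℝ)/2) *
        (((-1:ℝ)^((2*m)/2) / ((2*m)! : ℝ)) * (t₀/t) ^ (((((2*m:ℕ):ℝ)) + 1)/2) *
          Real.Gamma (((((2*m:ℕ):ℝ)) + 1)/2) ^ 2 * 2^(2*m)) := by
  have hρ : ((((2*m:ℕ):ℝ)) + 1)/2 = (m:ℝ) + 1/2 := by push_cast; ring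
  -- the integral
  have hb : (0:ℝ) < (4*t₀)⁻¹ := by positivity
  have hI : (∫ y, y ^ (2*m) * (C * Real.exp (-y^2/(4*t₀))))
      = C * ((4*t₀) ^ ((m:ℝ) + 1/2) * Real.Gamma ((m:ℝ) + 1/2)) := by
    have e1 : (∫ y, y ^ (2*m) * (C * Real.exp (-y^2/(4*t₀))))
        = C * ∫ y : ℝ, y ^ (2*m) * Real.exp (-((4*t₀)⁻¹ * y^2)) := by
      rw [← integral_const_mul]
      congr 1; funext y
      rw [show -((4*t₀)⁻¹ * y^2) = -y^2/(4*t₀) by field_simp]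
      ring
    rw [e1, aux_moment hb m, neg_div, Real.inv_rpow (by positivity),
      Real.rpow_neg (by positivity), inv_inv, hρ]
  rw [hI, aux_deriv_heatKernel ht (2*m), aux_aeval_hermite_zero m,
    show (2*m)/2 = m by omega, hρ, aux_Gamma_half m]
  -- rpow → sqrt/pow
  have e2 : (4*t₀ : ℝ) ^ ((m:ℝ) + 1/2) = (4*t₀)^m * Real.sqrt (4*t₀) := by
    rw [Real.rpow_add (by positivity), Real.rpow_natCast, Real.sqrt_eq_rpow]
  have e3 : (t₀/t : ℝ) ^ ((m:ℝ) + 1/2) = (t₀/t)^m * Real.sqrt (t₀/t) := by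
    rw [Real.rpow_add (by positivity), Real.rpow_natCast, Real.sqrt_eq_rpow]
  have e4 : (4*π*t : ℝ) ^ (-(1:ℝ)/2) = (Real.sqrt (4*π*t))⁻¹ := by
    rw [neg_div, Real.rpow_neg (by positivity), Real.sqrt_eq_rpow]
  have e5 : (π : ℝ) ^ (-(1:ℝ)/2) = (Real.sqrt π)⁻¹ := by
    rw [neg_div, Real.rpow_neg pi_pos.le, Real.sqrt_eq_rpow]
  have e6 : ((Real.sqrt (2*t))⁻¹)^(2*m) = ((2*t)^m)⁻¹ := by
    rw [inv_pow, pow_mul, Real.sq_sqrt (by positivity)]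
  have s4 : Real.sqrt 4 = 2 := by
    rw [show (4:ℝ) = 2^2 by norm_num, Real.sqrt_sq (by norm_num)]
  have e7 : Real.sqrt (4*t₀) = 2 * Real.sqrt t₀ := by
    rw [Real.sqrt_mul (by norm_num), s4]
  have e8 : Real.sqrt (4*π*t) = 2 * (Real.sqrt π * Real.sqrt t) := by
    rw [show (4*π*t : ℝ) = 4*(π*t) by ring, Real.sqrt_mul (by norm_num), s4,
      Real.sqrt_mul pi_pos.le]
  have e9 : Real.sqrt (t₀/t) = Real.sqrt t₀ / Real.sqrt t := by
    rw [Real.sqrt_div ht₀.le]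
  rw [e2, e3, e4, e5, e6, e7, e8, e9]
  -- replace t₀, t, π by squares of their roots
  have ha : Real.sqrt t₀ ^ 2 = t₀ := Real.sq_sqrt ht₀.le
  have hs : Real.sqrt t ^ 2 = t := Real.sq_sqrt ht.le
  have hp : Real.sqrt π ^ 2 = π := Real.sq_sqrt pi_pos.le
  have hd : ((2*m-1)‼ : ℝ) = ((2*m)! : ℝ) / (2^m * (m ! : ℝ)) := by
    have := aux_dfac m
    have h2 : ((2*m-1)‼ : ℝ) * (2^m * (m ! : ℝ)) = ((2*m)! : ℝ) := by exact_mod_cast this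
    field_simp at h2 ⊢
    linarith [h2]
  rw [hd, ← ha, ← hs, ← hp]
  have hsa : Real.sqrt t₀ > 0 := Real.sqrt_pos.mpr ht₀
  have hss : Real.sqrt t > 0 := Real.sqrt_pos.mpr ht
  have hsp : Real.sqrt π > 0 := Real.sqrt_pos.mpr pi_pos
  have hf1 : ((2*m)! : ℝ) > 0 := by positivity
  have hf2 : ((m)! : ℝ) > 0 := by positivity
  have p1 : ((4:ℝ)*t₀)^m = 2^(2*m) * t₀^m := by
    rw [mul_pow, show (4:ℝ) = 2^2 by norm_num, ← pow_mul]
  have p2 : ((2:ℝ)*t)^m = 2^m * t^m := mul_pow 2 t m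
  have p3 : ((4:ℝ))^m = 2^(2*m) := by rw [show (4:ℝ) = 2^2 by norm_num, ← pow_mul]
  rw [div_pow]
  simp only [p1, p2, p3]
  field_simp
  ring_nf
  rw [p3]
  rw [pow_mul' (-1:ℝ) m 4, show ((-1:ℝ))^4 = 1 by norm_num]
  ring

lemma aux_zero (C t₀ t : ℝ) (ht₀ : 0 < t₀) (ht : 0 < t) :
    Real.sqrt π * (((-1:ℝ)^(0:ℕ) / ((0:ℕ)! : ℝ)) *
        (∫ y, y ^ (0:ℕ) * (C * Real.exp (-y^2/(4*t₀)))) *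
        iteratedDeriv 0 (fun z => heatKernel1 z t) 0)
      = C * Real.sqrt (π * t₀ / t) := by
  have h := aux_key C t₀ t ht₀ ht 0
  norm_num at h ⊢
  rw [h, Real.Gamma_one_half_eq,
    show (π:ℝ)^(-(1/2):ℝ) = (Real.sqrt π)⁻¹ by rw [Real.rpow_neg pi_pos.le, Real.sqrt_eq_rpow],
    show ((t₀/t):ℝ)^((1/2):ℝ) = Real.sqrt (t₀/t) from (Real.sqrt_eq_rpow _).symm,
    show π*t₀/t = π*(t₀/t) by ring, Real.sqrt_mul pi_pos.le]
  have hsp : (0:ℝ) < Real.sqrt π := Real.sqrt_pos.mpr pi_pos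
  field_simp

open scoped Nat

end Helpers

open scoped Nat in
/-- value of the approximation at `x = 0` for a Gaussian initial datum. -/
theorem stmt_11 (C t₀ : ℝ) (hC : 0 < C) (ht₀ : 0 < t₀) (t : ℝ) (ht : 0 < t)
    (k : ℕ) (hk : Even k) :
    Real.sqrt π * heatApprox1 k (fun x => C * Real.exp (-x ^ 2 / (4 * t₀))) 0 t =
      C * Real.sqrt (π * t₀ / t) +
        C * π ^ (-(1 : ℝ) / 2) *
          ∑ j ∈ (Finset.range (k + 1)).filter (fun j => 0 < j ∧ Even j),
            ((-1 : ℝ) ^ (j / 2) / (j.factorial : ℝ)) * (t₀ / t) ^ (((j : ℝ) + 1) / 2) *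
              Real.Gamma (((j : ℝ) + 1) / 2) ^ 2 * 2 ^ j := by
  classical
  simp only [heatApprox1]
  rw [Finset.mul_sum]
  set F : ℕ → ℝ := fun j =>
    Real.sqrt π * (((-1:ℝ)^j / (j ! : ℝ)) *
      (∫ y, y ^ j * (C * Real.exp (-y^2/(4*t₀)))) *
      iteratedDeriv j (fun z => heatKernel1 z t) 0) with hF
  show ∑ j ∈ Finset.range (k+1), F j = _
  rw [← Finset.sum_filter_add_sum_filter_not (Finset.range (k+1)) (fun j => Even j) F]
  have hodd : ∑ j ∈ (Finset.range (k+1)).filter (fun j => ¬ Even j), F j = 0 := by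
    refine Finset.sum_eq_zero fun j hj => ?_
    have hj' : Odd j := Nat.not_even_iff_odd.mp (Finset.mem_filter.mp hj).2
    simp only [hF]
    rw [aux_odd hj' C (4*t₀)]
    ring
  rw [hodd, add_zero]
  have hins : (Finset.range (k+1)).filter (fun j => Even j)
      = insert 0 ((Finset.range (k+1)).filter (fun j => 0 < j ∧ Even j)) := by
    ext j
    simp only [Finset.mem_filter, Finset.mem_insert, Finset.mem_range]
    constructor
    · rintro ⟨h1, h2⟩
      rcases Nat.eq_zero_or_pos j with h | h
      · exact Or.inl h
      · exact Or.inr ⟨h1, h, h2⟩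
    · rintro (rfl | ⟨h1, h2, h3⟩)
      · exact ⟨Nat.succ_pos k, Even.zero⟩
      · exact ⟨h1, h3⟩
  rw [hins, Finset.sum_insert (by simp)]
  congr 1
  · exact aux_zero C t₀ t ht₀ ht
  · rw [Finset.mul_sum]
    refine Finset.sum_congr rfl fun j hj => ?_
    obtain ⟨m, rfl⟩ : ∃ m, j = 2*m := by
      obtain ⟨r, hr⟩ := (Finset.mem_filter.mp hj).2.2
      exact ⟨r, by omega⟩
    exact aux_key C t₀ t ht₀ ht m

end
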